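/- arXiv:2010.04894 — 2 statements merged into one kernel-verified Lean document; each statement's English description precedes it below -/
import Mathlib

section
/- Let P', P'' : ι → Option A be parametric sets with P' ≠ P'' and let P = P' ⋆+ P''. Then for every non-general parametric set 𝒫 : ι → Option A, the strict inequality ∼(𝒫, P) < ∼(𝒫, P') holds if and only if agree(𝒫, P) < agree(𝒫, P'). (That is, the parametric similarity ratio assigns a strictly greater value to P' than to the parametric sum P exactly when P' agrees with the query set 𝒫 on strictly more parameter–value pairs than P does.) -/
open Finset
open scoped Classical

/-- The parametric sum: pointwise, the common value if the two sets agree,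
and the general symbol `⋆` (modeled by `none`) otherwise. -/
noncomputable def psum {ι A : Type*} (P' P'' : ι → Option A) : ι → Option A :=
  fun p => if P' p = P'' p then P' p else none

/-- Parametric inequality `P ⋆≤ Q`. -/
def ple {ι A : Type*} (P Q : ι → Option A) : Prop :=
  ∀ p, P p = Q p ∨ P p = none ∨ Q p = none

/-- A parametric set is non-general if it contains no general symbol. -/
def nonGeneral {ι A : Type*} (P : ι → Option A) : Prop :=
  ∀ p, P p ≠ none

/-- Pairwise similarity score of two values. -/
noncomputable def pairSim {A : Type*} (α β : ℝ) (u v : Option A) : ℝ :=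
  if u = v then 1 else if u = none ∨ v = none then α else β

/-- The agreement count: number of parameters on which `P` and `Q` coincide. -/
noncomputable def agree {ι A : Type*} [Fintype ι] (P Q : ι → Option A) : ℕ :=
  (Finset.univ.filter fun p => P p = Q p).card

/-- The parametric similarity ratio `∼(P, Q)`. -/
noncomputable def sim {ι A : Type*} [Fintype ι] (α β : ℝ) (P Q : ι → Option A) : ℝ :=
  if P = Q then 1
  else ((agree P Q : ℝ) +
      ∏ p ∈ Finset.univ.filter (fun p => P p ≠ Q p), pairSim α β (P p) (Q p)) /
    (Fintype.card ι : ℝ)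

/-- For `P = P' ⋆+ P''` with `P' ≠ P''` and any non-general `Pq`,
`∼(Pq, P) < ∼(Pq, P')` holds iff `agree(Pq, P) < agree(Pq, P')`. -/
theorem sim_lt_iff_agree_lt {ι A : Type*} [Fintype ι] [Nonempty ι]
    (α β : ℝ) (hβ : 0 < β) (hβα : β < α) (hα : α < 1)
    (P' P'' : ι → Option A) (hne : P' ≠ P'')
    (P : ι → Option A) (hP : P = psum P' P'')
    (Pq : ι → Option A) (hPq : nonGeneral Pq) :
    sim α β Pq P < sim α β Pq P' ↔ agree Pq P < agree Pq P' := by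
  classical
  have hα0 : 0 < α := hβ.trans hβα
  obtain ⟨p0, hp0⟩ : ∃ p, P' p ≠ P'' p := by
    by_contra h; push_neg at h; exact hne (funext h)
  have hPp0 : P p0 = none := by simp [hP, psum, hp0]
  have hPqP : Pq ≠ P := by
    intro h
    exact hPq p0 (by rw [h, hPp0])
  have hn0 : (0:ℝ) < (Fintype.card ι : ℝ) := by
    exact_mod_cast Fintype.card_pos
  have hPcase : ∀ p, P p = P' p ∨ P p = none := by
    intro p; by_cases h : P' p = P'' p <;> simp [hP, psum, h]
  -- pairSim facts
  have hps_pos : ∀ (u v : Option A), 0 < pairSim α β u v := by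
    intro u v; unfold pairSim; split_ifs <;> linarith
  have hps_le1 : ∀ (u v : Option A), pairSim α β u v ≤ 1 := by
    intro u v; unfold pairSim; split_ifs <;> linarith
  have hps_leα : ∀ (u v : Option A), u ≠ v → pairSim α β u v ≤ α := by
    intro u v h; unfold pairSim; rw [if_neg h]; split_ifs <;> linarith
  set S : Finset ι := Finset.univ.filter (fun p => Pq p = P p) with hS
  set S' : Finset ι := Finset.univ.filter (fun p => Pq p = P' p) with hS'
  have hsub : S ⊆ S' := by
    intro p hp
    simp only [hS, hS', mem_filter, mem_univ, true_and] at hp ⊢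
    rcases hPcase p with h | h
    · rw [hp, h]
    · exact absurd (hp.trans h) (hPq p)
  have hp0S : p0 ∉ S := by
    simp only [hS, mem_filter, mem_univ, true_and]
    rw [hPp0]; exact hPq p0
  have haP : agree Pq P = S.card := rfl
  have haP' : agree Pq P' = S'.card := rfl
  set T : Finset ι := Finset.univ.filter (fun p => Pq p ≠ P p) with hT
  set T' : Finset ι := Finset.univ.filter (fun p => Pq p ≠ P' p) with hT'
  have hp0T : p0 ∈ T := by
    simp only [hT, mem_filter, mem_univ, true_and]
    rw [hPp0]; exact hPq p0
  have hprodP_pos : 0 < ∏ p ∈ T, pairSim α β (Pq p) (P p) :=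
    Finset.prod_pos fun p _ => hps_pos _ _
  have hprodP'_pos : 0 < ∏ p ∈ T', pairSim α β (Pq p) (P' p) :=
    Finset.prod_pos fun p _ => hps_pos _ _
  have hprodP_le1 : ∏ p ∈ T, pairSim α β (Pq p) (P p) ≤ 1 :=
    Finset.prod_le_one (fun p _ => (hps_pos _ _).le) (fun p _ => hps_le1 _ _)
  have hprodP'_le1 : ∏ p ∈ T', pairSim α β (Pq p) (P' p) ≤ 1 :=
    Finset.prod_le_one (fun p _ => (hps_pos _ _).le) (fun p _ => hps_le1 _ _)
  have hprodP_leα : ∏ p ∈ T, pairSim α β (Pq p) (P p) ≤ α := by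
    rw [← Finset.mul_prod_erase T _ hp0T]
    have h1 : pairSim α β (Pq p0) (P p0) ≤ α := by
      apply hps_leα; rw [hPp0]; exact hPq p0
    have h2 : ∏ p ∈ T.erase p0, pairSim α β (Pq p) (P p) ≤ 1 :=
      Finset.prod_le_one (fun p _ => (hps_pos _ _).le) (fun p _ => hps_le1 _ _)
    calc pairSim α β (Pq p0) (P p0) * ∏ p ∈ T.erase p0, pairSim α β (Pq p) (P p)
        ≤ α * 1 := by
          apply mul_le_mul h1 h2 (Finset.prod_pos fun p _ => hps_pos _ _).le hα0.le
      _ = α := mul_one α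
  have hSlt : S.card < Fintype.card ι := by
    rw [← Finset.card_univ]
    exact Finset.card_lt_card ((Finset.ssubset_iff_of_subset (Finset.subset_univ S)).mpr
      ⟨p0, Finset.mem_univ _, hp0S⟩)
  have hsimP : sim α β Pq P =
      ((S.card : ℝ) + ∏ p ∈ T, pairSim α β (Pq p) (P p)) / (Fintype.card ι : ℝ) := by
    rw [sim, if_neg hPqP, haP]
  by_cases hPqP' : Pq = P'
  · -- both sides true
    have hS'univ : S' = Finset.univ := by
      ext p; simp [hS', hPqP']
    have hrhs : agree Pq P < agree Pq P' := by
      rw [haP, haP', hS'univ, Finset.card_univ]; exact hSlt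
    have hlhs : sim α β Pq P < sim α β Pq P' := by
      rw [hsimP, sim, if_pos hPqP']
      rw [div_lt_one hn0]
      have h1 : (S.card : ℝ) + 1 ≤ (Fintype.card ι : ℝ) := by exact_mod_cast hSlt
      linarith [hprodP_leα]
    exact iff_of_true hlhs hrhs
  · have hsimP' : sim α β Pq P' =
        ((S'.card : ℝ) + ∏ p ∈ T', pairSim α β (Pq p) (P' p)) / (Fintype.card ι : ℝ) := by
      rw [sim, if_neg hPqP', haP']
    rw [hsimP, hsimP', div_lt_div_iff_of_pos_right hn0, haP, haP']
    have hle : S.card ≤ S'.card := Finset.card_le_card hsub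
    rcases lt_or_eq_of_le hle with hlt | heq
    · have h1 : (S.card : ℝ) + 1 ≤ (S'.card : ℝ) := by exact_mod_cast hlt
      exact iff_of_true (by linarith) hlt
    · -- both sides false
      have hSeq : S = S' := Finset.eq_of_subset_of_card_le hsub (le_of_eq heq.symm)
      have hTeq : T = T' := by
        ext p
        have : p ∈ S ↔ p ∈ S' := by rw [hSeq]
        simp only [hS, hS', mem_filter, mem_univ, true_and] at this
        simp only [hT, hT', mem_filter, mem_univ, true_and]
        exact not_congr this
      have hprodle : ∏ p ∈ T', pairSim α β (Pq p) (P' p) ≤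
          ∏ p ∈ T, pairSim α β (Pq p) (P p) := by
        rw [← hTeq]
        apply Finset.prod_le_prod (fun p _ => (hps_pos _ _).le)
        intro p hpT
        have hpne : Pq p ≠ P p := by
          simpa only [hT, mem_filter, mem_univ, true_and] using hpT
        have hpne' : Pq p ≠ P' p := by
          have := hpT; rw [hTeq] at this
          simpa only [hT', mem_filter, mem_univ, true_and] using this
        rcases hPcase p with h | h
        · rw [h]
        · have hfP : pairSim α β (Pq p) (P p) = α := by
            rw [h]; unfold pairSim
            rw [if_neg (by rw [← h]; exact hpne), if_pos (Or.inr rfl)]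
          rw [hfP]
          exact hps_leα _ _ hpne'
      constructor
      · intro h; exfalso; rw [heq] at h; linarith
      · intro h; exfalso; omega
end

section
/- For all parametric sets P, Q : ι → Option A over a nonempty finite parameter type ι, the parametric similarity ratio satisfies β^{|ι|} / |ι| ≤ ∼(P, Q) ≤ 1, where |ι| is the number of parameters. (The possible values of the parametric similarity score of two congruent parametric sets of size n lie between βⁿ/n and 1.) -/
open Finset
open scoped Classical

/-- For all parametric sets `P Q`, the similarity ratio satisfies
`β^|ι| / |ι| ≤ ∼(P, Q) ≤ 1`. -/
theorem sim_bounds {ι A : Type*} [Fintype ι] [Nonempty ι]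
    (α β : ℝ) (hβ : 0 < β) (hβα : β < α) (hα : α < 1)
    (P Q : ι → Option A) :
    β ^ Fintype.card ι / (Fintype.card ι : ℝ) ≤ sim α β P Q ∧ sim α β P Q ≤ 1 := by
  classical
  set n := Fintype.card ι with hn
  have hn1 : 1 ≤ n := Fintype.card_pos
  have hnR : (0:ℝ) < (n:ℝ) := by exact_mod_cast hn1
  have hβ1 : β < 1 := hβα.trans hα
  have hβnle1 : β ^ n ≤ 1 := pow_le_one₀ hβ.le hβ1.le
  by_cases hPQ : P = Q
  · constructor
    · rw [sim, if_pos hPQ]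
      rw [div_le_one hnR]
      exact hβnle1.trans (by exact_mod_cast hn1)
    · rw [sim, if_pos hPQ]
  · set D := Finset.univ.filter (fun p => P p ≠ Q p) with hD
    have hDne : D.Nonempty := by
      rcases Function.ne_iff.mp hPQ with ⟨p, hp⟩
      exact ⟨p, by simp [hD, hp]⟩
    have hDcard : D.card ≤ n := by
      simpa [hn] using Finset.card_le_univ D
    have hfac_lb : ∀ p ∈ D, β ≤ pairSim α β (P p) (Q p) := by
      intro p hp
      have hne : P p ≠ Q p := by simpa [hD] using hp
      unfold pairSim
      rw [if_neg hne]
      split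
      · exact hβα.le
      · exact le_refl β
    have hfac_ub : ∀ p ∈ D, pairSim α β (P p) (Q p) ≤ 1 := by
      intro p hp
      have hne : P p ≠ Q p := by simpa [hD] using hp
      unfold pairSim
      rw [if_neg hne]
      split
      · exact hα.le
      · exact hβ1.le
    have hprod_lb : β ^ D.card ≤ ∏ p ∈ D, pairSim α β (P p) (Q p) := by
      calc β ^ D.card = ∏ _p ∈ D, β := by rw [Finset.prod_const]
        _ ≤ _ := Finset.prod_le_prod (fun p _ => hβ.le) hfac_lb
    have hprod_ub : ∏ p ∈ D, pairSim α β (P p) (Q p) ≤ 1 :=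
      Finset.prod_le_one (fun p hp => (lt_of_lt_of_le hβ (hfac_lb p hp)).le) hfac_ub
    have hagree : (agree P Q : ℝ) ≤ (n : ℝ) - 1 := by
      have h1 : agree P Q + D.card = n := by
        rw [agree, hD, hn]
        rw [Finset.card_filter_add_card_filter_not]
        exact Finset.card_univ
      have h2 : 1 ≤ D.card := Finset.card_pos.mpr hDne
      have : agree P Q ≤ n - 1 := by omega
      have hn1' : (1:ℝ) ≤ (n:ℝ) := by exact_mod_cast hn1
      calc (agree P Q : ℝ) ≤ ((n - 1 : ℕ) : ℝ) := by exact_mod_cast this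
        _ = (n:ℝ) - 1 := by push_cast [Nat.cast_sub hn1]; ring
    rw [sim, if_neg hPQ]
    constructor
    · apply div_le_div_of_nonneg_right ?_ hnR.le |>.trans_eq rfl
      calc β ^ n ≤ β ^ D.card := pow_le_pow_of_le_one hβ.le hβ1.le hDcard
        _ ≤ ∏ p ∈ D, pairSim α β (P p) (Q p) := hprod_lb
        _ ≤ (agree P Q : ℝ) + ∏ p ∈ D, pairSim α β (P p) (Q p) := by
            exact le_add_of_nonneg_left (by positivity)
    · rw [div_le_one hnR]
      calc (agree P Q : ℝ) + ∏ p ∈ D, pairSim α β (P p) (Q p)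
          ≤ ((n:ℝ) - 1) + 1 := add_le_add hagree hprod_ub
        _ = (n:ℝ) := by ring
end
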